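/- Let d ≥ 8 be an even integer and let B be a bubble gadget that is properly attached to S in a finite simple graph G. Then no two distinct vertices of B are d-twins in the subgraph of G induced by V(B) ∪ S. -/

import Mathlib

open scoped symmDiff

/-- `sdAt G u v` is the number of vertices outside `{u, v}` adjacent to exactly one of `u, v`. -/
noncomputable def sdAt {V : Type*} (G : SimpleGraph V) (u v : V) : ℕ :=
  ((G.neighborSet u \ {v}) ∆ (G.neighborSet v \ {u})).ncard

/-- Vertices of the bubble gadget: the `w × w` grid (first coordinate the column, second the
row, both zero-indexed) minus the two rightmost cells `(w-2, w-1)`, `(w-1, w-1)` of the top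
row (row `w - 1`). -/
abbrev BubbleVert (w : ℕ) : Type :=
  {p : Fin w × Fin w // ¬ (((p.2 : ℕ) = w - 1) ∧ w - 2 ≤ (p.1 : ℕ))}

/-- The bubble gadget graph: rook adjacency, distinct cells adjacent iff they share a column
or a row. -/
def bubbleGraph (w : ℕ) : SimpleGraph (BubbleVert w) where
  Adj p q := p ≠ q ∧ (p.1.1 = q.1.1 ∨ p.1.2 = q.1.2)
  symm := ⟨by rintro p q ⟨h1, h2⟩; exact ⟨h1.symm, h2.imp Eq.symm Eq.symm⟩⟩
  loopless := ⟨fun p h => h.1 rfl⟩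

/-! Embed the bubble in the rook graph `K_w □ K_w`, `w = d / 2 + 2`. There two distinct vertices
are separated by at least `2 (w - 1)` vertices, namely those sharing a line with exactly one of
them. Removing the two holes of the bubble loses at most two of these, and loses both only if
exactly one of the two vertices lies in the top row or the rightmost column, since the corner
hole `(w - 1, w - 1)` shares a line exactly with those vertices. In that case the boundary vertex
has a neighbour in `S` which the other one lacks. Either way at least `2 w - 3 = d + 1` vertices
of `G[V(B) ∪ S]` separate them. -/

namespace SimpleGraph

variable {V W : Type*}

def sdSet (G : SimpleGraph V) (u v : V) : Set V :=
  (G.neighborSet u ∆ G.neighborSet v) \ {u, v}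

theorem sdAt_eq_ncard_sdSet (G : SimpleGraph V) (u v : V) :
    sdAt G u v = (G.sdSet u v).ncard := by
  unfold sdAt sdSet
  congr 1
  ext z
  simp only [Set.mem_symmDiff, Set.mem_sdiff, mem_neighborSet, Set.mem_singleton_iff,
    Set.mem_insert_iff, not_or]
  constructor
  · rintro (⟨⟨hu, hzv⟩, hv⟩ | ⟨⟨hv, hzu⟩, hu⟩)
    · exact ⟨Or.inl ⟨hu, fun h => hv ⟨h, hu.ne'⟩⟩, hu.ne', hzv⟩
    · exact ⟨Or.inr ⟨hv, fun h => hu ⟨h, hv.ne'⟩⟩, hzu, hv.ne'⟩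
  · rintro ⟨⟨hu, hv⟩ | ⟨hv, hu⟩, hzu, hzv⟩
    · exact Or.inl ⟨⟨hu, hzv⟩, fun h => hv h.1⟩
    · exact Or.inr ⟨⟨hv, hzu⟩, fun h => hu h.1⟩

theorem sdAt_comm (G : SimpleGraph V) (u v : V) : sdAt G u v = sdAt G v u := by
  rw [sdAt, sdAt, symmDiff_comm]

namespace Embedding

variable {H : SimpleGraph V} {G : SimpleGraph W}

theorem image_sdSet (φ : H ↪g G) (u v : V) :
    φ '' H.sdSet u v = G.sdSet (φ u) (φ v) ∩ Set.range φ := by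
  ext z
  constructor
  · rintro ⟨z, hz, rfl⟩
    simpa [sdSet, Set.mem_symmDiff, φ.injective.eq_iff] using hz
  · rintro ⟨hz, z, rfl⟩
    exact ⟨z, by simpa [sdSet, Set.mem_symmDiff, φ.injective.eq_iff] using hz, rfl⟩

theorem sdAt_eq_ncard (φ : H ↪g G) (u v : V) :
    sdAt H u v = (G.sdSet (φ u) (φ v) ∩ Set.range φ).ncard := by
  rw [← image_sdSet, Set.ncard_image_of_injective _ φ.injective, sdAt_eq_ncard_sdSet]

theorem sdAt_le [Finite W] (φ : H ↪g G) (u v : V) : sdAt H u v ≤ sdAt G (φ u) (φ v) := by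
  rw [φ.sdAt_eq_ncard, sdAt_eq_ncard_sdSet]
  exact Set.ncard_le_ncard Set.inter_subset_left

theorem sdAt_lt [Finite W] (φ : H ↪g G) {u v : V} {s : W} (hs : s ∉ Set.range φ)
    (hu : G.Adj (φ u) s) (hv : ¬ G.Adj (φ v) s) : sdAt H u v < sdAt G (φ u) (φ v) := by
  rw [φ.sdAt_eq_ncard, sdAt_eq_ncard_sdSet]
  refine Set.ncard_lt_ncard ⟨Set.inter_subset_left, fun h => hs (h ?_).2⟩
  refine ⟨Or.inl ⟨hu, hv⟩, ?_⟩
  rintro (rfl | rfl)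
  exacts [G.irrefl hu, hs ⟨v, rfl⟩]

end Embedding

end SimpleGraph

open SimpleGraph

abbrev rookGraph (w : ℕ) : SimpleGraph (Fin w × Fin w) := ⊤ □ ⊤

section Bubble

variable {w : ℕ}

theorem rookGraph_adj {x z : Fin w × Fin w} :
    (rookGraph w).Adj x z ↔ x ≠ z ∧ (x.1 = z.1 ∨ x.2 = z.2) := by
  simp only [boxProd_adj, top_adj, ne_eq, Prod.ext_iff]
  tauto

theorem mem_sdSet_rookGraph {x y z : Fin w × Fin w} :
    z ∈ (rookGraph w).sdSet x y ↔
      z ≠ x ∧ z ≠ y ∧ Xor (x.1 = z.1 ∨ x.2 = z.2) (y.1 = z.1 ∨ y.2 = z.2) := by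
  simp only [sdSet, Set.mem_sdiff, Set.mem_symmDiff, mem_neighborSet, rookGraph_adj,
    Set.mem_insert_iff, Set.mem_singleton_iff, xor_def, ne_eq, not_or]
  tauto

theorem two_mul_le_ncard_sdSet_rookGraph_of_fst_eq {x y : Fin w × Fin w} (hxy : x ≠ y)
    (h : x.1 = y.1) : 2 * (w - 1) ≤ ((rookGraph w).sdSet x y).ncard := by
  have h2 : x.2 ≠ y.2 := fun h2 => hxy (Prod.ext h h2)
  have hsub : (({x.1}ᶜ ×ˢ {x.2, y.2} : Finset _) : Set (Fin w × Fin w)) ⊆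
      (rookGraph w).sdSet x y := by
    rintro ⟨i, j⟩ hz
    simp only [Finset.coe_product, Set.mem_prod, Finset.mem_coe, Finset.mem_compl,
      Finset.mem_singleton, Finset.mem_insert] at hz
    simp only [mem_sdSet_rookGraph, ne_eq, Prod.ext_iff, xor_def]
    grind
  calc 2 * (w - 1) = (({x.1}ᶜ ×ˢ {x.2, y.2} : Finset _)).card := by
        rw [Finset.card_product, Finset.card_compl, Finset.card_singleton, Fintype.card_fin,
          Finset.card_pair h2, mul_comm]
    _ ≤ _ := by rw [← Set.ncard_coe_finset]; exact Set.ncard_le_ncard hsub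

theorem two_mul_le_ncard_sdSet_rookGraph_of_snd_eq {x y : Fin w × Fin w} (hxy : x ≠ y)
    (h : x.2 = y.2) : 2 * (w - 1) ≤ ((rookGraph w).sdSet x y).ncard := by
  have h1 : x.1 ≠ y.1 := fun h1 => hxy (Prod.ext h1 h)
  have hsub : (({x.1, y.1} ×ˢ {x.2}ᶜ : Finset _) : Set (Fin w × Fin w)) ⊆
      (rookGraph w).sdSet x y := by
    rintro ⟨i, j⟩ hz
    simp only [Finset.coe_product, Set.mem_prod, Finset.mem_coe, Finset.mem_compl,
      Finset.mem_singleton, Finset.mem_insert] at hz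
    simp only [mem_sdSet_rookGraph, ne_eq, Prod.ext_iff, xor_def]
    grind
  calc 2 * (w - 1) = (({x.1, y.1} ×ˢ {x.2}ᶜ : Finset _)).card := by
        rw [Finset.card_product, Finset.card_compl, Finset.card_singleton, Fintype.card_fin,
          Finset.card_pair h1]
    _ ≤ _ := by rw [← Set.ncard_coe_finset]; exact Set.ncard_le_ncard hsub

theorem four_mul_le_ncard_sdSet_rookGraph {x y : Fin w × Fin w} (h1 : x.1 ≠ y.1)
    (h2 : x.2 ≠ y.2) : 4 * (w - 2) ≤ ((rookGraph w).sdSet x y).ncard := by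
  set cols : Finset (Fin w) := {x.1, y.1}
  set rows : Finset (Fin w) := {x.2, y.2}
  have hsub : ((cols ×ˢ rowsᶜ ∪ colsᶜ ×ˢ rows : Finset _) : Set (Fin w × Fin w)) ⊆
      (rookGraph w).sdSet x y := by
    rintro ⟨i, j⟩ hz
    simp only [cols, rows, Finset.coe_union, Finset.coe_product, Set.mem_union,
      Set.mem_prod, Finset.mem_coe, Finset.mem_compl, Finset.mem_insert,
      Finset.mem_singleton] at hz
    simp only [mem_sdSet_rookGraph, ne_eq, Prod.ext_iff, xor_def]
    grind
  have hdisj : Disjoint (cols ×ˢ rowsᶜ) (colsᶜ ×ˢ rows) :=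
    Finset.disjoint_product.mpr (Or.inl disjoint_compl_right)
  calc 4 * (w - 2) = (cols ×ˢ rowsᶜ ∪ colsᶜ ×ˢ rows).card := by
        rw [Finset.card_union_of_disjoint hdisj, Finset.card_product, Finset.card_product,
          Finset.card_compl, Finset.card_compl, Fintype.card_fin, Finset.card_pair h1,
          Finset.card_pair h2]
        ring
    _ ≤ _ := by rw [← Set.ncard_coe_finset]; exact Set.ncard_le_ncard hsub

theorem two_mul_le_ncard_sdSet_rookGraph (hw : 3 ≤ w) {x y : Fin w × Fin w} (hxy : x ≠ y) :
    2 * (w - 1) ≤ ((rookGraph w).sdSet x y).ncard := by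
  by_cases h1 : x.1 = y.1
  · exact two_mul_le_ncard_sdSet_rookGraph_of_fst_eq hxy h1
  by_cases h2 : x.2 = y.2
  · exact two_mul_le_ncard_sdSet_rookGraph_of_snd_eq hxy h2
  exact (four_mul_le_ncard_sdSet_rookGraph h1 h2).trans' (by omega)

def bubbleToRook (w : ℕ) : bubbleGraph w ↪g rookGraph w where
  toFun := Subtype.val
  inj' := Subtype.val_injective
  map_rel_iff' := by
    intro x y
    simp only [Function.Embedding.coeFn_mk, rookGraph_adj, bubbleGraph, ne_eq,
      Subtype.ext_iff]

def bubbleHoles (w : ℕ) : Set (Fin w × Fin w) := {p | (p.2 : ℕ) = w - 1 ∧ w - 2 ≤ (p.1 : ℕ)}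

theorem range_bubbleToRook : Set.range (bubbleToRook w) = (bubbleHoles w)ᶜ :=
  Subtype.range_coe_subtype

theorem ncard_bubbleHoles_le : (bubbleHoles w).ncard ≤ 2 := by
  have hcols : (bubbleHoles w).ncard ≤ ({w - 2, w - 1} : Set ℕ).ncard := by
    refine Set.ncard_le_ncard_of_injOn (fun p => (p.1 : ℕ)) ?_ ?_
    · rintro p ⟨-, hp⟩
      simp only [Set.mem_insert_iff, Set.mem_singleton_iff]
      omega
    · rintro p ⟨hp, -⟩ q ⟨hq, -⟩ h
      exact Prod.ext (Fin.ext h) (Fin.ext (hp.trans hq.symm))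
  exact hcols.trans (Set.ncard_insert_le _ _ |>.trans (by rw [Set.ncard_singleton]))

def IsBubbleBoundary (x : BubbleVert w) : Prop := (x.1.2 : ℕ) = w - 1 ∨ (x.1.1 : ℕ) = w - 1

theorem ncard_sdSet_inter_bubbleHoles_le_one {x y : BubbleVert w}
    (h : ¬ Xor (IsBubbleBoundary x) (IsBubbleBoundary y)) :
    ((rookGraph w).sdSet x.1 y.1 ∩ bubbleHoles w).ncard ≤ 1 := by
  have hcol : ∀ p ∈ (rookGraph w).sdSet x.1 y.1 ∩ bubbleHoles w, (p.1 : ℕ) = w - 2 := by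
    rintro p ⟨hp, hp₂, hp₁⟩
    by_contra hne
    have hcorner : ∀ z : BubbleVert w, (z.1.1 = p.1 ∨ z.1.2 = p.2) ↔ IsBubbleBoundary z := by
      intro z
      have := p.1.isLt
      simp only [IsBubbleBoundary, Fin.ext_iff]
      omega
    rw [mem_sdSet_rookGraph, hcorner x, hcorner y] at hp
    exact h hp.2.2
  rw [Set.ncard_le_one]
  intro p hp q hq
  exact Prod.ext (Fin.ext ((hcol p hp).trans (hcol q hq).symm))
    (Fin.ext (hp.2.1.trans hq.2.1.symm))

theorem sdAt_bubbleGraph_add_ncard_inter_bubbleHoles (x y : BubbleVert w) :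
    sdAt (bubbleGraph w) x y + ((rookGraph w).sdSet x.1 y.1 ∩ bubbleHoles w).ncard =
      ((rookGraph w).sdSet x.1 y.1).ncard := by
  rw [(bubbleToRook w).sdAt_eq_ncard, range_bubbleToRook, add_comm, ← Set.sdiff_eq]
  exact Set.ncard_inter_add_ncard_sdiff_eq_ncard _ _

theorem sdAt_bubbleGraph_bound (hw : 3 ≤ w) {x y : BubbleVert w} (hxy : x ≠ y) :
    2 * w - 3 ≤ sdAt (bubbleGraph w) x y ∨
      Xor (IsBubbleBoundary x) (IsBubbleBoundary y) ∧ 2 * w - 4 ≤ sdAt (bubbleGraph w) x y := by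
  have hsplit := sdAt_bubbleGraph_add_ncard_inter_bubbleHoles x y
  have hrook := two_mul_le_ncard_sdSet_rookGraph hw (Subtype.val_injective.ne hxy)
  by_cases hxor : Xor (IsBubbleBoundary x) (IsBubbleBoundary y)
  · have hholes : ((rookGraph w).sdSet x.1 y.1 ∩ bubbleHoles w).ncard ≤ 2 :=
      (Set.ncard_le_ncard Set.inter_subset_right).trans ncard_bubbleHoles_le
    right
    exact ⟨hxor, by omega⟩
  · have := ncard_sdSet_inter_bubbleHoles_le_one hxor
    left
    omega

end Bubble

/-- If the bubble gadget `B` (embedded in `G` via `f` as an induced subgraph) is properly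
attached to `S` in `G`, then no two distinct vertices of `B` are `d`-twins in the subgraph of
`G` induced by `V(B) ∪ S`. -/
theorem bubble_no_d_twins {V : Type*} [Fintype V] (d : ℕ) (hd8 : 8 ≤ d) (hde : Even d)
    (G : SimpleGraph V) (f : BubbleVert (d / 2 + 2) → V)
    (hinj : Function.Injective f)
    (hemb : ∀ x y : BubbleVert (d / 2 + 2),
      G.Adj (f x) (f y) ↔ (bubbleGraph (d / 2 + 2)).Adj x y)
    (S : Set V) (hS : S = {v | v ∉ Set.range f ∧ ∃ x, G.Adj v (f x)})
    (hattach1 : ∀ x : BubbleVert (d / 2 + 2),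
      ((x.1.2 : ℕ) = d / 2 + 1 ∨ (x.1.1 : ℕ) = d / 2 + 1) →
      1 ≤ (G.neighborSet (f x) \ Set.range f).ncard ∧
        (G.neighborSet (f x) \ Set.range f).ncard ≤ 2)
    (hattach2 : ∀ x : BubbleVert (d / 2 + 2),
      ¬ ((x.1.2 : ℕ) = d / 2 + 1 ∨ (x.1.1 : ℕ) = d / 2 + 1) →
      G.neighborSet (f x) \ Set.range f = ∅) :
    ∀ x y : BubbleVert (d / 2 + 2), x ≠ y →
      ¬ sdAt (G.induce (Set.range f ∪ S))
          ⟨f x, Or.inl ⟨x, rfl⟩⟩ ⟨f y, Or.inl ⟨y, rfl⟩⟩ ≤ d := by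
  intro x y hxy
  let φ : bubbleGraph (d / 2 + 2) ↪g G.induce (Set.range f ∪ S) :=
    ⟨⟨fun z => ⟨f z, Or.inl ⟨z, rfl⟩⟩, fun _ _ h => hinj (congrArg Subtype.val h)⟩, hemb _ _⟩
  have hextra : ∀ z z', IsBubbleBoundary z → ¬ IsBubbleBoundary z' →
      sdAt (bubbleGraph (d / 2 + 2)) z z' <
        sdAt (G.induce (Set.range f ∪ S)) (φ z) (φ z') := by
    intro z z' hz hz'
    obtain ⟨s, hzs, hs⟩ : (G.neighborSet (f z) \ Set.range f).Nonempty :=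
      Set.nonempty_of_ncard_ne_zero (Nat.one_le_iff_ne_zero.mp (hattach1 z hz).1)
    have hsS : s ∈ S := hS ▸ ⟨hs, z, hzs.symm⟩
    have hz's : ¬ G.Adj (f z') s := fun h => (hattach2 z' hz').subset ⟨h, hs⟩
    have hsφ : (⟨s, Or.inr hsS⟩ : ↥(Set.range f ∪ S)) ∉ Set.range φ :=
      fun ⟨t, ht⟩ => hs ⟨t, congrArg Subtype.val ht⟩
    exact φ.sdAt_lt hsφ hzs hz's
  obtain ⟨k, rfl⟩ := hde
  change ¬ sdAt _ (φ x) (φ y) ≤ k + k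
  rcases sdAt_bubbleGraph_bound (by omega) hxy with h | ⟨hxor | hxor, h⟩
  · have := φ.sdAt_le x y
    omega
  · have := hextra x y hxor.1 hxor.2
    omega
  · have := hextra y x hxor.1 hxor.2
    rw [sdAt_comm, sdAt_comm (G.induce _)] at this
    omega
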